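/- arXiv:1703.01484 — 5 statements merged into one kernel-verified Lean document; each statement's English description precedes it below -/
import Mathlib

section
/- Let f : ℝ → ℝ be convex, let y ∈ ℝ and x ∈ ℤ with y + 1 ≤ x, and let f^pl denote the piecewise-linear interpolation of f on integer breakpoints (f^pl(t) = f(⌊t⌋) + (t - ⌊t⌋)(f(⌈t⌉) - f(⌊t⌋))). If φ_y is a subgradient of f at y and φ_x is a subgradient of f^pl at x, then φ_y ≤ φ_x. -/
/-- Piecewise-linear interpolation of `f` on integer breakpoints. -/
noncomputable def fpl (f : ℝ → ℝ) (t : ℝ) : ℝ :=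
  f (⌊t⌋ : ℝ) + (t - (⌊t⌋ : ℝ)) * (f (⌈t⌉ : ℝ) - f (⌊t⌋ : ℝ))

/-- `φ` is a subgradient of `g` at `p`. -/
def IsSubgradientAt (g : ℝ → ℝ) (p φ : ℝ) : Prop :=
  ∀ q : ℝ, φ * (q - p) ≤ g q - g p

/-
Chain of slopes: `φy ≤ (f x - f y)/(x - y) ≤ f x - f (x - 1) ≤ φx`. The first step is the
subgradient inequality at `y`, the second is monotonicity of secant slopes of the convex `f`
through `x` (as `y ≤ x - 1`), and the last is the subgradient inequality for `f^pl` at `x`,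
tested at `x - 1`, where `f^pl` agrees with `f` because both points are integers.
-/

theorem fpl_intCast (f : ℝ → ℝ) (n : ℤ) : fpl f n = f n := by
  simp [fpl]

namespace IsSubgradientAt

variable {g : ℝ → ℝ} {p φ : ℝ}

theorem le_slope_of_lt (h : IsSubgradientAt g p φ) {q : ℝ} (hpq : p < q) :
    φ ≤ (g q - g p) / (q - p) :=
  (le_div_iff₀ (sub_pos.mpr hpq)).mpr (h q)

theorem slope_le_of_lt (h : IsSubgradientAt g p φ) {q : ℝ} (hqp : q < p) :
    (g q - g p) / (q - p) ≤ φ :=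
  (div_le_iff_of_neg (sub_neg.mpr hqp)).mpr (h q)

end IsSubgradientAt

theorem stmt_0 (f : ℝ → ℝ) (hf : ConvexOn ℝ Set.univ f)
    (y : ℝ) (x : ℤ) (hxy : y + 1 ≤ (x : ℝ))
    (φy φx : ℝ)
    (hφy : IsSubgradientAt f y φy)
    (hφx : IsSubgradientAt (fpl f) (x : ℝ) φx) :
    φy ≤ φx := by
  have hpred : ((x - 1 : ℤ) : ℝ) = x - 1 := by push_cast; ring
  calc φy ≤ (f x - f y) / (x - y) := hφy.le_slope_of_lt (by linarith)
    _ = (f y - f x) / (y - x) := by rw [← neg_sub (f y), ← neg_sub y, neg_div_neg_eq]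
    _ ≤ (f (x - 1) - f x) / (x - 1 - x) :=
        hf.secant_mono trivial trivial trivial (by linarith) (by linarith) (by linarith)
    _ = (fpl f ((x - 1 : ℤ) : ℝ) - fpl f x) / (((x - 1 : ℤ) : ℝ) - x) := by
        rw [fpl_intCast, fpl_intCast, hpred]
    _ ≤ φx := hφx.slope_le_of_lt (by rw [hpred]; linarith)
end

section
/- Consider minimizing a separable convex function f(x) = Σ_{i=1}^n f_i(x_i), where each f_i : ℝ → ℝ is convex and M'-Lipschitz with M' < M, subject to prefix-sum constraints a_i ≤ Σ_{k≤σ(i)} x_k ≤ b_i for i ∈ {1,…,m-1} and Σ_k x_k = B, where the objective is Σ f̄_i(x_i) with f̄_i the exact L1-penalty extension of f_i outside [c_i, d_i] with slope M. If there exists a feasible solution x with c_i ≤ x_i ≤ d_i for all i, then every optimal solution x* of the penalized problem satisfies c_i ≤ x*_i ≤ d_i for all i. -/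
open Finset

/-- Exact L1-penalty extension of `f` outside `[c, d]` with slope `M`. -/
noncomputable def penExt (f : ℝ → ℝ) (c d M : ℝ) (x : ℝ) : ℝ :=
  if x < c then f c + M * (c - x)
  else if x ≤ d then f x
  else f d + M * (x - d)

/-- Feasibility for the RAP-NC constraint system (variables indexed `1,…,n`). -/
def FeasibleRAPNC (n m : ℕ) (σ : ℕ → ℕ) (a b : ℕ → ℝ) (B : ℝ) (x : ℕ → ℝ) : Prop :=
  (∀ i, 1 ≤ i → i ≤ m - 1 →
      a i ≤ ∑ k ∈ Finset.Icc 1 (σ i), x k ∧ ∑ k ∈ Finset.Icc 1 (σ i), x k ≤ b i) ∧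
  ∑ k ∈ Finset.Icc 1 n, x k = B

/-!
Suppose `x*ᵢ > dᵢ` and compare `x*` with the feasible in-bounds point `x₀`. Moving a small `ε`
from `i` to a `j` with `x*ⱼ < x₀ⱼ ≤ dⱼ` lowers `f̄ᵢ` by exactly `Mε` and raises `f̄ⱼ` by at most
`M'ε < Mε`, so it contradicts optimality once the move is feasible. Since `x*` and `x₀` have the
same total, `j` can be chosen so that on every prefix containing exactly one of `i`, `j` the move
pushes the prefix sum of `x*` towards that of `x₀`, which lies strictly beyond it; as `x₀` is
feasible, these constraints are slack. The lower bound is symmetric.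
-/

open Filter Topology

section PenaltyExtension

variable {f : ℝ → ℝ} {c d M M' x y : ℝ}

lemma penExt_of_lt_left (hx : x < c) : penExt f c d M x = f c + M * (c - x) := if_pos hx

lemma penExt_of_mem_Icc (hx : x ∈ Set.Icc c d) : penExt f c d M x = f x := by
  rw [penExt, if_neg hx.1.not_gt, if_pos hx.2]

lemma penExt_of_right_lt (hc : c ≤ x) (hx : d < x) : penExt f c d M x = f d + M * (x - d) := by
  rw [penExt, if_neg hc.not_gt, if_neg hx.not_ge]

lemma sub_le_mul_sub_of_abs_sub_le (hlip : ∀ u v : ℝ, |f u - f v| ≤ M' * |u - v|) (hxy : x ≤ y) :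
    f y - f x ≤ M' * (y - x) ∧ f x - f y ≤ M' * (y - x) := by
  have h := hlip y x
  rw [abs_of_nonneg (sub_nonneg.2 hxy), abs_le] at h
  constructor <;> linarith [h.1, h.2]

lemma penExt_sub_le_of_le_right (hM : M' ≤ M) (hlip : ∀ u v : ℝ, |f u - f v| ≤ M' * |u - v|)
    (hxy : x ≤ y) (hy : y ≤ d) :
    penExt f c d M y - penExt f c d M x ≤ M' * (y - x) := by
  have hM' : 0 ≤ M' := by simpa using (abs_nonneg _).trans (hlip 1 0)
  rcases lt_or_ge y c with hyc | hyc
  · rw [penExt_of_lt_left hyc, penExt_of_lt_left (hxy.trans_lt hyc)]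
    nlinarith [mul_nonneg (hM'.trans hM) (sub_nonneg.2 hxy), mul_nonneg hM' (sub_nonneg.2 hxy)]
  rw [penExt_of_mem_Icc ⟨hyc, hy⟩]
  rcases lt_or_ge x c with hxc | hxc
  · rw [penExt_of_lt_left hxc]
    nlinarith [(sub_le_mul_sub_of_abs_sub_le hlip hyc).1,
      mul_nonneg (hM'.trans hM) (sub_nonneg.2 hxc.le), mul_nonneg hM' (sub_nonneg.2 hxc.le)]
  · rw [penExt_of_mem_Icc ⟨hxc, hxy.trans hy⟩]
    exact (sub_le_mul_sub_of_abs_sub_le hlip hxy).1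

lemma penExt_sub_le_of_left_le (hM : M' ≤ M) (hlip : ∀ u v : ℝ, |f u - f v| ≤ M' * |u - v|)
    (hc : c ≤ x) (hxy : x ≤ y) :
    penExt f c d M x - penExt f c d M y ≤ M' * (y - x) := by
  have hM' : 0 ≤ M' := by simpa using (abs_nonneg _).trans (hlip 1 0)
  rcases lt_or_ge d x with hxd | hxd
  · rw [penExt_of_right_lt hc hxd, penExt_of_right_lt (hc.trans hxy) (hxd.trans_le hxy)]
    nlinarith [mul_nonneg (hM'.trans hM) (sub_nonneg.2 hxy), mul_nonneg hM' (sub_nonneg.2 hxy)]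
  rw [penExt_of_mem_Icc ⟨hc, hxd⟩]
  rcases lt_or_ge d y with hyd | hyd
  · rw [penExt_of_right_lt (hc.trans hxy) hyd]
    nlinarith [(sub_le_mul_sub_of_abs_sub_le hlip hxd).2,
      mul_nonneg (hM'.trans hM) (sub_nonneg.2 hyd.le), mul_nonneg hM' (sub_nonneg.2 hyd.le)]
  · rw [penExt_of_mem_Icc ⟨hc.trans hxy, hyd⟩]
    exact (sub_le_mul_sub_of_abs_sub_le hlip hxy).2

end PenaltyExtension

section Exchange

variable {x y : ℕ → ℝ}

lemma sum_Icc_one_add_sum_Ioc {u v : ℕ} (huv : u ≤ v) :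
    ∑ k ∈ Icc 1 u, x k + ∑ k ∈ Ioc u v, x k = ∑ k ∈ Icc 1 v, x k := by
  have h := Icc_add_one_left_eq_Ioc (0 : ℕ)
  rw [zero_add] at h
  rw [h, h]
  exact sum_Ioc_consecutive x (Nat.zero_le u) huv

lemma exists_exchange_index {n i : ℕ} (hsum : ∑ k ∈ Icc 1 n, x k = ∑ k ∈ Icc 1 n, y k)
    (hi : i ∈ Icc 1 n) (hyx : y i < x i) :
    ∃ j ∈ Icc 1 n, j ≠ i ∧ x j < y j ∧
      (∀ t, j ≤ t → t < i → ∑ k ∈ Icc 1 t, x k < ∑ k ∈ Icc 1 t, y k) ∧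
      (∀ t, i ≤ t → t < j → ∑ k ∈ Icc 1 t, y k < ∑ k ∈ Icc 1 t, x k) := by
  classical
  obtain ⟨hi₁, hin⟩ := mem_Icc.1 hi
  set P : ℕ → ℝ := fun t => ∑ k ∈ Icc 1 t, x k - ∑ k ∈ Icc 1 t, y k
  have hv : ∃ t, i ≤ t ∧ P t ≤ 0 := ⟨n, hin, by simp [P, hsum]⟩
  -- `u` is the last prefix before `i` where `x` is not behind `y`, `v` the first one from `i` on
  -- where `x` is not ahead; on `(u, v]` the mass of `x` is at most that of `y`, yet larger at `i`.
  set u := Nat.findGreatest (fun t => 0 ≤ P t) (i - 1)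
  set v := Nat.find hv
  have hPu : 0 ≤ P u := Nat.findGreatest_spec (P := fun t => 0 ≤ P t) (Nat.zero_le _) (by simp [P])
  have hu : u ≤ i - 1 := Nat.findGreatest_le _
  obtain ⟨hiv, hPv⟩ : i ≤ v ∧ P v ≤ 0 := Nat.find_spec hv
  have hvn : v ≤ n := Nat.find_min' hv ⟨hin, by simp [P, hsum]⟩
  have hblock : ∑ k ∈ Ioc u v, x k - ∑ k ∈ Ioc u v, y k = P v - P u := by
    simp only [P, ← sum_Icc_one_add_sum_Ioc (x := x) (show u ≤ v by omega),
      ← sum_Icc_one_add_sum_Ioc (x := y) (show u ≤ v by omega)]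
    ring
  have hiuv : i ∈ Ioc u v := mem_Ioc.2 ⟨by omega, hiv⟩
  have herase : ∑ k ∈ (Ioc u v).erase i, x k < ∑ k ∈ (Ioc u v).erase i, y k := by
    linarith [add_sum_erase _ x hiuv, add_sum_erase _ y hiuv]
  obtain ⟨j, hj, hxy⟩ := exists_lt_of_sum_lt herase
  obtain ⟨hji, hj⟩ := mem_erase.1 hj
  obtain ⟨huj, hjv⟩ := mem_Ioc.1 hj
  refine ⟨j, mem_Icc.2 ⟨by omega, by omega⟩, hji, hxy, fun t hjt hti => ?_, fun t hit htj => ?_⟩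
  · have := Nat.findGreatest_is_greatest (P := fun t => 0 ≤ P t) (by omega : u < t) (by omega)
    simpa only [P, not_le, sub_neg] using this
  · simpa only [P, not_le, sub_pos] using not_and.1 (Nat.find_min hv (by omega : t < v)) hit

end Exchange

section Transfer

def moveMass (x : ℕ → ℝ) (i j : ℕ) (ε : ℝ) : ℕ → ℝ := x - Pi.single i ε + Pi.single j ε

variable {n m : ℕ} {σ : ℕ → ℕ} {a b : ℕ → ℝ} {B : ℝ} {x y : ℕ → ℝ} {i j : ℕ}

lemma sum_Icc_moveMass (hi : 1 ≤ i) (hj : 1 ≤ j) (ε : ℝ) (t : ℕ) :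
    ∑ k ∈ Icc 1 t, moveMass x i j ε k
      = ∑ k ∈ Icc 1 t, x k - (if i ≤ t then ε else 0) + (if j ≤ t then ε else 0) := by
  simp [moveMass, sum_add_distrib, sum_sub_distrib, sum_pi_single', hi, hj]

lemma eventually_le_and_le_sub_ite_add_ite {s l u : ℝ} {p q : Prop} [Decidable p] [Decidable q]
    (hs : l ≤ s ∧ s ≤ u) (hq : q → ¬p → s < u) (hp : p → ¬q → l < s) :
    ∀ᶠ ε in 𝓝[>] (0 : ℝ),
      l ≤ s - (if p then ε else 0) + (if q then ε else 0) ∧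
        s - (if p then ε else 0) + (if q then ε else 0) ≤ u := by
  by_cases hp' : p <;> by_cases hq' : q
  · exact Eventually.of_forall fun ε => by simpa [hp', hq'] using hs
  · filter_upwards [Ioo_mem_nhdsGT (sub_pos.2 (hp hp' hq'))] with ε hε
    simp only [hp', hq', if_true, if_false]
    constructor <;> linarith [hε.1, hε.2]
  · filter_upwards [Ioo_mem_nhdsGT (sub_pos.2 (hq hq' hp'))] with ε hε
    simp only [hp', hq', if_true, if_false]
    constructor <;> linarith [hε.1, hε.2]
  · exact Eventually.of_forall fun ε => by simpa [hp', hq'] using hs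

lemma eventually_feasibleRAPNC_moveMass (hx : FeasibleRAPNC n m σ a b B x)
    (hy : FeasibleRAPNC n m σ a b B y) (hi : i ∈ Icc 1 n) (hj : j ∈ Icc 1 n)
    (hji : ∀ t, j ≤ t → t < i → ∑ k ∈ Icc 1 t, x k < ∑ k ∈ Icc 1 t, y k)
    (hij : ∀ t, i ≤ t → t < j → ∑ k ∈ Icc 1 t, y k < ∑ k ∈ Icc 1 t, x k) :
    ∀ᶠ ε in 𝓝[>] (0 : ℝ), FeasibleRAPNC n m σ a b B (moveMass x i j ε) := by
  obtain ⟨hi₁, hin⟩ := mem_Icc.1 hi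
  obtain ⟨hj₁, hjn⟩ := mem_Icc.1 hj
  have hlevel : ∀ l ∈ Icc 1 (m - 1), ∀ᶠ ε in 𝓝[>] (0 : ℝ),
      a l ≤ ∑ k ∈ Icc 1 (σ l), moveMass x i j ε k ∧
        ∑ k ∈ Icc 1 (σ l), moveMass x i j ε k ≤ b l := by
    intro l hl
    obtain ⟨hl₁, hlm⟩ := mem_Icc.1 hl
    simp only [sum_Icc_moveMass hi₁ hj₁]
    exact eventually_le_and_le_sub_ite_add_ite (hx.1 l hl₁ hlm)
      (fun hjl hil => (hji _ hjl (not_le.1 hil)).trans_le (hy.1 l hl₁ hlm).2)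
      (fun hil hjl => (hy.1 l hl₁ hlm).1.trans_lt (hij _ hil (not_le.1 hjl)))
  filter_upwards [(eventually_all_finset _).2 hlevel] with ε hε
  refine ⟨fun l hl₁ hlm => hε l (mem_Icc.2 ⟨hl₁, hlm⟩), ?_⟩
  rw [sum_Icc_moveMass hi₁ hj₁, if_pos hin, if_pos hjn, hx.2]
  ring

lemma sum_moveMass_lt {g : ℕ → ℝ → ℝ} {s : Finset ℕ} {ε : ℝ} (hi : i ∈ s) (hj : j ∈ s)
    (hij : i ≠ j) (h : g i (x i - ε) + g j (x j + ε) < g i (x i) + g j (x j)) :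
    ∑ k ∈ s, g k (moveMass x i j ε k) < ∑ k ∈ s, g k (x k) := by
  rw [← sub_neg, ← sum_sub_distrib, sum_eq_add_of_mem i j hi hj hij]
  · simp only [moveMass, Pi.add_apply, Pi.sub_apply, Pi.single_eq_same, Pi.single_eq_of_ne hij,
      Pi.single_eq_of_ne hij.symm, add_zero, sub_zero]
    linarith
  · intro k _ hk
    simp [moveMass, hk.1, hk.2]

end Transfer

section Optimality

variable {n m : ℕ} {σ : ℕ → ℕ} {a b : ℕ → ℝ} {B : ℝ} {f : ℕ → ℝ → ℝ} {c d : ℕ → ℝ} {M M' : ℝ}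
  {x₀ x : ℕ → ℝ} {i : ℕ}

lemma le_right_of_penalized_optimal (hM : M' < M)
    (hlip : ∀ i, ∀ x y : ℝ, |f i x - f i y| ≤ M' * |x - y|)
    (hx₀ : FeasibleRAPNC n m σ a b B x₀) (hx₀bd : ∀ i, 1 ≤ i → i ≤ n → c i ≤ x₀ i ∧ x₀ i ≤ d i)
    (hx : FeasibleRAPNC n m σ a b B x)
    (hopt : ∀ y : ℕ → ℝ, FeasibleRAPNC n m σ a b B y →
      ∑ i ∈ Icc 1 n, penExt (f i) (c i) (d i) M (x i) ≤
      ∑ i ∈ Icc 1 n, penExt (f i) (c i) (d i) M (y i))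
    (hi : i ∈ Icc 1 n) : x i ≤ d i := by
  by_contra! hxi
  obtain ⟨hcx₀i, hx₀di⟩ := hx₀bd i (mem_Icc.1 hi).1 (mem_Icc.1 hi).2
  obtain ⟨j, hj, hji, hxj, hsign₁, hsign₂⟩ :=
    exists_exchange_index (hx.2.trans hx₀.2.symm) hi (hx₀di.trans_lt hxi)
  have hxjd : x j < d j := hxj.trans_le (hx₀bd j (mem_Icc.1 hj).1 (mem_Icc.1 hj).2).2
  obtain ⟨ε, hfeas, hε₀, hε⟩ := ((eventually_feasibleRAPNC_moveMass hx hx₀ hi hj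
    hsign₁ hsign₂).and (Ioo_mem_nhdsGT (lt_min (sub_pos.2 hxi) (sub_pos.2 hxjd)))).exists
  rw [lt_min_iff] at hε
  refine (hopt _ hfeas).not_gt (sum_moveMass_lt hi hj hji.symm ?_)
  have hdrop : penExt (f i) (c i) (d i) M (x i - ε) = penExt (f i) (c i) (d i) M (x i) - M * ε := by
    rw [penExt_of_right_lt (by linarith) (by linarith), penExt_of_right_lt (by linarith) hxi]
    ring
  have hrise := penExt_sub_le_of_le_right (c := c j) (M := M) hM.le (hlip j)
    (le_add_of_nonneg_right hε₀.le) (by linarith : x j + ε ≤ d j)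
  nlinarith

lemma left_le_of_penalized_optimal (hM : M' < M)
    (hlip : ∀ i, ∀ x y : ℝ, |f i x - f i y| ≤ M' * |x - y|)
    (hx₀ : FeasibleRAPNC n m σ a b B x₀) (hx₀bd : ∀ i, 1 ≤ i → i ≤ n → c i ≤ x₀ i ∧ x₀ i ≤ d i)
    (hx : FeasibleRAPNC n m σ a b B x)
    (hopt : ∀ y : ℕ → ℝ, FeasibleRAPNC n m σ a b B y →
      ∑ i ∈ Icc 1 n, penExt (f i) (c i) (d i) M (x i) ≤
      ∑ i ∈ Icc 1 n, penExt (f i) (c i) (d i) M (y i))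
    (hi : i ∈ Icc 1 n) : c i ≤ x i := by
  by_contra! hxi
  have hcx₀i := (hx₀bd i (mem_Icc.1 hi).1 (mem_Icc.1 hi).2).1
  obtain ⟨j, hj, hji, hxj, hsign₁, hsign₂⟩ :=
    exists_exchange_index (hx₀.2.trans hx.2.symm) hi (hxi.trans_le hcx₀i)
  have hcxj : c j < x j := (hx₀bd j (mem_Icc.1 hj).1 (mem_Icc.1 hj).2).1.trans_lt hxj
  obtain ⟨ε, hfeas, hε₀, hε⟩ := ((eventually_feasibleRAPNC_moveMass hx hx₀ hj hi
    hsign₂ hsign₁).and (Ioo_mem_nhdsGT (lt_min (sub_pos.2 hxi) (sub_pos.2 hcxj)))).exists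
  rw [lt_min_iff] at hε
  refine (hopt _ hfeas).not_gt (sum_moveMass_lt hj hi hji ?_)
  have hdrop : penExt (f i) (c i) (d i) M (x i + ε) = penExt (f i) (c i) (d i) M (x i) - M * ε := by
    rw [penExt_of_lt_left (by linarith), penExt_of_lt_left hxi]
    ring
  have hrise := penExt_sub_le_of_left_le (d := d j) (M := M) hM.le (hlip j)
    (by linarith : c j ≤ x j - ε) (sub_le_self _ hε₀.le)
  nlinarith

end Optimality

theorem stmt_7_general (n m : ℕ)
    (σ : ℕ → ℕ)
    (a b : ℕ → ℝ)
    (B : ℝ) (f : ℕ → ℝ → ℝ) (c d : ℕ → ℝ) (M M' : ℝ) (hM : M' < M)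
    (hlip : ∀ i, ∀ x y : ℝ, |f i x - f i y| ≤ M' * |x - y|)
    -- there is a feasible solution within the bounds [c_i, d_i]
    (x0 : ℕ → ℝ) (hx0 : FeasibleRAPNC n m σ a b B x0)
    (hx0bd : ∀ i, 1 ≤ i → i ≤ n → c i ≤ x0 i ∧ x0 i ≤ d i)
    -- x* is an optimal solution of the penalized problem
    (xstar : ℕ → ℝ) (hxstar : FeasibleRAPNC n m σ a b B xstar)
    (hopt : ∀ x : ℕ → ℝ, FeasibleRAPNC n m σ a b B x →
      ∑ i ∈ Finset.Icc 1 n, penExt (f i) (c i) (d i) M (xstar i) ≤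
      ∑ i ∈ Finset.Icc 1 n, penExt (f i) (c i) (d i) M (x i)) :
    ∀ i, 1 ≤ i → i ≤ n → c i ≤ xstar i ∧ xstar i ≤ d i := fun _ hi₁ hin =>
  ⟨left_le_of_penalized_optimal hM hlip hx0 hx0bd hxstar hopt (mem_Icc.2 ⟨hi₁, hin⟩),
    le_right_of_penalized_optimal hM hlip hx0 hx0bd hxstar hopt (mem_Icc.2 ⟨hi₁, hin⟩)⟩

theorem stmt_7 (n m : ℕ) (hn : 0 < n) (hm : 0 < m)
    (σ : ℕ → ℕ) (hσmono : ∀ i j, i ≤ j → j ≤ m → σ i ≤ σ j)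
    (hσ0 : σ 0 = 0) (hσm : σ m = n)
    (a b : ℕ → ℝ) (hab : ∀ i, 1 ≤ i → i ≤ m - 1 → a i ≤ b i)
    (B : ℝ) (f : ℕ → ℝ → ℝ) (c d : ℕ → ℝ) (M M' : ℝ) (hM : M' < M)
    (hconv : ∀ i, ConvexOn ℝ Set.univ (f i))
    (hlip : ∀ i, ∀ x y : ℝ, |f i x - f i y| ≤ M' * |x - y|)
    -- there is a feasible solution within the bounds [c_i, d_i]
    (x0 : ℕ → ℝ) (hx0 : FeasibleRAPNC n m σ a b B x0)
    (hx0bd : ∀ i, 1 ≤ i → i ≤ n → c i ≤ x0 i ∧ x0 i ≤ d i)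
    -- x* is an optimal solution of the penalized problem
    (xstar : ℕ → ℝ) (hxstar : FeasibleRAPNC n m σ a b B xstar)
    (hopt : ∀ x : ℕ → ℝ, FeasibleRAPNC n m σ a b B x →
      ∑ i ∈ Finset.Icc 1 n, penExt (f i) (c i) (d i) M (xstar i) ≤
      ∑ i ∈ Finset.Icc 1 n, penExt (f i) (c i) (d i) M (x i)) :
    ∀ i, 1 ≤ i → i ≤ n → c i ≤ xstar i ∧ xstar i ≤ d i :=
  stmt_7_general n m σ a b B f c d M M' hM hlip x0 hx0 hx0bd xstar hxstar hopt
end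

section
/- Consider minimizing a separable piecewise-linear convex objective f^pl(x) = Σ_{i=1}^n f^pl_i(x_i), where each f^pl_i is the integer-breakpoint interpolation of a convex function f_i, over the polytope P = {x ∈ ℝ^n : a_i ≤ Σ_{k=1}^{σ(i)} x_k ≤ b_i for i < m, Σ_{k=1}^n x_k = B} with integer data a_i, b_i, B. If x is a feasible point of P with at least one non-integer coordinate, then there exists a feasible x' ∈ P with f^pl(x') ≤ f^pl(x) and strictly fewer non-integer coordinates. -/
/-! On each cell `[⌊t⌋, ⌈t⌉]` the interpolation `fpl f` is affine, so moving mass `δ` from a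
non-integer coordinate `x j` to another one `x i` changes the objective by `δ (sᵢ - sⱼ)`, where
`sₖ` is the slope of the cell of `x k`; choosing the sign of `δ` makes this nonpositive, and
taking `|δ|` maximal subject to staying in both cells makes one of the two coordinates integral.
Since the total sum is the integer `B`, there are at least two non-integer coordinates; taking
`i < j` the two smallest keeps the prefix constraints valid. -/

open Finset

/-- Membership in the RAP-NC polytope with integer data. -/
def MemRAPNC (n m : ℕ) (σ : ℕ → ℕ) (a b : ℕ → ℤ) (B : ℤ) (x : ℕ → ℝ) : Prop :=
  (∀ i, 1 ≤ i → i ≤ m - 1 →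
      (a i : ℝ) ≤ ∑ k ∈ Finset.Icc 1 (σ i), x k ∧
      ∑ k ∈ Finset.Icc 1 (σ i), x k ≤ (b i : ℝ)) ∧
  ∑ k ∈ Finset.Icc 1 n, x k = (B : ℝ)

-- Number of non-integer coordinates of `x` among indices 1..n
open Classical in
noncomputable def nonIntegerCount (n : ℕ) (x : ℕ → ℝ) : ℕ :=
  ((Finset.Icc 1 n).filter (fun i => ¬ ∃ z : ℤ, x i = (z : ℝ))).card

lemma fpl_eq_of_mem_Icc (f : ℝ → ℝ) {l : ℤ} {t : ℝ} (ht : t ∈ Set.Icc (l : ℝ) (l + 1)) :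
    fpl f t = f l + (t - l) * (f (l + 1) - f l) := by
  obtain ⟨hlt, htl⟩ := ht
  rcases htl.eq_or_lt with rfl | htl
  · simp [fpl]
  rcases hlt.eq_or_lt with rfl | hlt
  · simp [fpl]
  have hfloor : ⌊t⌋ = l := Int.floor_eq_iff.2 ⟨hlt.le, htl⟩
  have hceil : ⌈t⌉ = l + 1 := Int.ceil_eq_iff.2 ⟨by push_cast; linarith, by push_cast; linarith⟩
  simp [fpl, hfloor, hceil]

lemma fpl_eq_add_of_mem_Icc_floor_ceil (f : ℝ → ℝ) {t t' : ℝ}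
    (ht' : t' ∈ Set.Icc (⌊t⌋ : ℝ) ⌈t⌉) :
    fpl f t' = fpl f t + (t' - t) * (f ⌈t⌉ - f ⌊t⌋) := by
  by_cases ht : t ∈ Set.range Int.cast
  · obtain ⟨z, rfl⟩ := ht
    obtain rfl : t' = z := by simpa using ht'
    ring
  have hceil : (⌈t⌉ : ℝ) = ⌊t⌋ + 1 := by
    exact_mod_cast (Int.ceil_eq_floor_add_one_iff_notMem t).2 ht
  have htcell : t ∈ Set.Icc (⌊t⌋ : ℝ) (⌊t⌋ + 1) := ⟨Int.floor_le t, (Int.lt_floor_add_one t).le⟩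
  rw [hceil] at ht' ⊢
  rw [fpl_eq_of_mem_Icc f ht', fpl_eq_of_mem_Icc f htcell]
  ring

lemma mem_Icc_of_mem_Icc_floor_ceil {a b : ℤ} {t t' : ℝ} (ht : t ∈ Set.Icc (a : ℝ) b)
    (ht' : t' ∈ Set.Icc (⌊t⌋ : ℝ) ⌈t⌉) : t' ∈ Set.Icc (a : ℝ) b :=
  ⟨le_trans (by exact_mod_cast Int.le_floor.2 ht.1) ht'.1,
    ht'.2.trans (by exact_mod_cast Int.ceil_le.2 ht.2)⟩

lemma exists_int_sum_eq {ι : Type*} {s : Finset ι} {x : ι → ℝ}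
    (h : ∀ k ∈ s, ∃ z : ℤ, x k = z) : ∃ z : ℤ, ∑ k ∈ s, x k = z := by
  refine sum_induction x (fun r => ∃ z : ℤ, r = z) ?_ ⟨0, by simp⟩ h
  rintro _ _ ⟨u, rfl⟩ ⟨v, rfl⟩
  exact ⟨u + v, by push_cast; rfl⟩

lemma sum_add_single_sub_single {ι M : Type*} [DecidableEq ι] [AddCommGroup M]
    (s : Finset ι) (x : ι → M) (i j : ι) (δ : M) :
    ∑ k ∈ s, (x + Pi.single i δ - Pi.single j δ : ι → M) k =
      ∑ k ∈ s, x k + (if i ∈ s then δ else 0) - (if j ∈ s then δ else 0) := by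
  simp [sum_add_distrib, sum_sub_distrib]

lemma sum_fpl_add_single_sub_single {ι : Type*} [DecidableEq ι] (f : ι → ℝ → ℝ)
    {s : Finset ι} {x : ι → ℝ} {i j : ι} {δ : ℝ} (hij : i ≠ j) (hi : i ∈ s) (hj : j ∈ s)
    (hδi : x i + δ ∈ Set.Icc (⌊x i⌋ : ℝ) ⌈x i⌉) (hδj : x j - δ ∈ Set.Icc (⌊x j⌋ : ℝ) ⌈x j⌉) :
    ∑ k ∈ s, fpl (f k) ((x + Pi.single i δ - Pi.single j δ : ι → ℝ) k) =
      ∑ k ∈ s, fpl (f k) (x k) +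
        δ * ((f i ⌈x i⌉ - f i ⌊x i⌋) - (f j ⌈x j⌉ - f j ⌊x j⌋)) := by
  rw [← sub_eq_iff_eq_add', ← sum_sub_distrib, sum_eq_add_of_mem i j hi hj hij]
  · simp only [Pi.sub_apply, Pi.add_apply, Pi.single_eq_same, Pi.single_eq_of_ne hij,
      Pi.single_eq_of_ne hij.symm, add_zero, sub_zero]
    rw [fpl_eq_add_of_mem_Icc_floor_ceil (f i) hδi, fpl_eq_add_of_mem_Icc_floor_ceil (f j) hδj]
    ring
  · rintro k - ⟨hki, hkj⟩
    simp [Pi.single_eq_of_ne hki, Pi.single_eq_of_ne hkj]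

lemma exists_shift_mem_Icc_floor_ceil (u v c : ℝ) :
    ∃ δ : ℝ, u + δ ∈ Set.Icc (⌊u⌋ : ℝ) ⌈u⌉ ∧ v - δ ∈ Set.Icc (⌊v⌋ : ℝ) ⌈v⌉ ∧ δ * c ≤ 0 ∧
      ((∃ z : ℤ, u + δ = z) ∨ ∃ z : ℤ, v - δ = z) := by
  wlog hc : c ≤ 0 generalizing u v c
  · obtain ⟨η, hηv, hηu, hηc, hηint⟩ := this v u (-c) (by linarith)
    refine ⟨-η, by simpa [← sub_eq_add_neg] using hηu, by simpa using hηv, by linarith,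
      ?_⟩
    simpa [← sub_eq_add_neg, or_comm] using hηint
  have hu := Int.floor_le u
  have hu' := Int.le_ceil u
  have hv := Int.floor_le v
  have hv' := Int.le_ceil v
  have hδu := min_le_left ((⌈u⌉ : ℝ) - u) (v - ⌊v⌋)
  have hδv := min_le_right ((⌈u⌉ : ℝ) - u) (v - ⌊v⌋)
  have hδ : 0 ≤ min ((⌈u⌉ : ℝ) - u) (v - ⌊v⌋) := le_min (by linarith) (by linarith)
  refine ⟨min ((⌈u⌉ : ℝ) - u) (v - ⌊v⌋), ⟨by linarith, by linarith⟩, ⟨by linarith, by linarith⟩,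
    mul_nonpos_of_nonneg_of_nonpos hδ hc, ?_⟩
  rcases min_choice ((⌈u⌉ : ℝ) - u) (v - ⌊v⌋) with h | h <;> rw [h]
  · exact Or.inl ⟨⌈u⌉, by ring⟩
  · exact Or.inr ⟨⌊v⌋, by ring⟩

lemma Finset.exists_two_least {α : Type*} [LinearOrder α] {T : Finset α} (hT : 1 < #T) :
    ∃ i ∈ T, ∃ j ∈ T, i < j ∧ ∀ k ∈ T, k < j → k = i := by
  have hT0 : T.Nonempty := card_pos.1 (by omega)
  have hne : (T.erase (T.min' hT0)).Nonempty := by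
    rw [← card_pos, card_erase_of_mem (min'_mem T hT0)]
    omega
  have hj := min'_mem _ hne
  refine ⟨T.min' hT0, min'_mem T hT0, _, mem_of_mem_erase hj,
    (min'_le T _ (mem_of_mem_erase hj)).lt_of_ne (min'_erase_ne_self hne).symm, ?_⟩
  intro k hk hkj
  by_contra hki
  exact hkj.not_ge (min'_le _ k (mem_erase.2 ⟨hki, hk⟩))

lemma one_lt_nonIntegerCount {n : ℕ} {x : ℕ → ℝ} {B : ℤ} (hB : ∑ k ∈ Icc 1 n, x k = B)
    (h : 0 < nonIntegerCount n x) : 1 < nonIntegerCount n x := by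
  classical
  by_contra hle
  obtain ⟨i, hi⟩ := card_eq_one.1 (show nonIntegerCount n x = 1 by omega)
  have hiT : i ∈ {i} := mem_singleton_self i
  rw [← hi, mem_filter] at hiT
  obtain ⟨z, hz⟩ := exists_int_sum_eq (s := (Icc 1 n).erase i) (x := x) fun k hk => by
    by_contra hk'
    have hkT : k ∈ ((Icc 1 n).filter fun i => ¬∃ z : ℤ, x i = z) :=
      mem_filter.2 ⟨mem_of_mem_erase hk, hk'⟩
    rw [hi, mem_singleton] at hkT
    exact ne_of_mem_erase hk hkT
  have hsplit := add_sum_erase (Icc 1 n) x hiT.1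
  exact hiT.2 ⟨B - z, by push_cast; linarith⟩

lemma exists_pair_nonint_of_sum_eq_int {n : ℕ} {x : ℕ → ℝ} {B : ℤ}
    (hB : ∑ k ∈ Icc 1 n, x k = B) (h : 0 < nonIntegerCount n x) :
    ∃ i j, 1 ≤ i ∧ i < j ∧ j ≤ n ∧ (¬∃ z : ℤ, x i = z) ∧ (¬∃ z : ℤ, x j = z) ∧
      ∀ k ∈ Ico 1 j, k ≠ i → ∃ z : ℤ, x k = z := by
  classical
  obtain ⟨i, hi, j, hj, hij, hleast⟩ := exists_two_least (one_lt_nonIntegerCount hB h)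
  rw [mem_filter, mem_Icc] at hi hj
  refine ⟨i, j, hi.1.1, hij, hj.1.2, hi.2, hj.2, fun k hk hki => ?_⟩
  rw [mem_Ico] at hk
  by_contra hk'
  exact hki (hleast k (mem_filter.2 ⟨mem_Icc.2 ⟨hk.1, by omega⟩, hk'⟩) hk.2)

lemma nonIntegerCount_lt {n : ℕ} {x x' : ℕ → ℝ}
    (hmono : ∀ k ∈ Icc 1 n, (∃ z : ℤ, x k = z) → ∃ z : ℤ, x' k = z) {p : ℕ} (hp : p ∈ Icc 1 n)
    (hpx : ¬∃ z : ℤ, x p = z) (hpx' : ∃ z : ℤ, x' p = z) :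
    nonIntegerCount n x' < nonIntegerCount n x := by
  classical
  refine card_lt_card ((ssubset_iff_of_subset fun k => ?_).2 ⟨p, ?_, ?_⟩)
  · simp only [mem_filter]
    exact fun ⟨hk, hk'⟩ => ⟨hk, mt (hmono k hk) hk'⟩
  · exact mem_filter.2 ⟨hp, hpx⟩
  · exact fun hp' => (mem_filter.1 hp').2 hpx'

lemma nonIntegerCount_add_single_sub_single_lt {n : ℕ} {x : ℕ → ℝ} {i j : ℕ} {δ : ℝ}
    (hij : i ≠ j) (hi : i ∈ Icc 1 n) (hj : j ∈ Icc 1 n)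
    (hxi : ¬∃ z : ℤ, x i = z) (hxj : ¬∃ z : ℤ, x j = z)
    (hδ : (∃ z : ℤ, x i + δ = z) ∨ ∃ z : ℤ, x j - δ = z) :
    nonIntegerCount n (x + Pi.single i δ - Pi.single j δ : ℕ → ℝ) < nonIntegerCount n x := by
  have hmono : ∀ k ∈ Icc 1 n, (∃ z : ℤ, x k = z) →
      ∃ z : ℤ, (x + Pi.single i δ - Pi.single j δ : ℕ → ℝ) k = z := by
    intro k _ hk
    have hki : k ≠ i := by rintro rfl; exact hxi hk
    have hkj : k ≠ j := by rintro rfl; exact hxj hk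
    simpa [Pi.single_eq_of_ne hki, Pi.single_eq_of_ne hkj] using hk
  rcases hδ with hδ | hδ
  · exact nonIntegerCount_lt hmono hi hxi (by simpa [Pi.single_eq_of_ne hij] using hδ)
  · exact nonIntegerCount_lt hmono hj hxj
      (by simpa [Pi.single_eq_of_ne hij.symm, ← sub_eq_add_neg] using hδ)

-- Moving `δ` from `x j` to `x i` changes only the prefix sums containing `i` but not `j`;
-- such a prefix is `x i` plus an integer, so it stays between its integer neighbours.
lemma MemRAPNC.add_single_sub_single {n m : ℕ} {σ : ℕ → ℕ} {a b : ℕ → ℤ} {B : ℤ}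
    {x : ℕ → ℝ} (hx : MemRAPNC n m σ a b B x) {i j : ℕ} {δ : ℝ}
    (hi : 1 ≤ i) (hij : i < j) (hj : j ≤ n) (hint : ∀ k ∈ Ico 1 j, k ≠ i → ∃ z : ℤ, x k = z)
    (hδ : x i + δ ∈ Set.Icc (⌊x i⌋ : ℝ) ⌈x i⌉) :
    MemRAPNC n m σ a b B (x + Pi.single i δ - Pi.single j δ : ℕ → ℝ) := by
  refine ⟨fun l hl hlm => ?_, ?_⟩
  · have hS : ∑ k ∈ Icc 1 (σ l), x k ∈ Set.Icc (a l : ℝ) (b l) := hx.1 l hl hlm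
    show _ ∈ Set.Icc _ _
    rw [sum_add_single_sub_single]
    by_cases hjl : j ≤ σ l
    · simpa [hi, hjl, hij.le.trans hjl, (show 1 ≤ j by omega)] using hS
    by_cases hil : i ≤ σ l
    · obtain ⟨z, hz⟩ := exists_int_sum_eq (s := (Icc 1 (σ l)).erase i) (x := x) fun k hk => by
        obtain ⟨hki, hk⟩ := mem_erase.1 hk
        exact hint k (mem_Ico.2 ⟨(mem_Icc.1 hk).1, by grind⟩) hki
      have hsplit := add_sum_erase (Icc 1 (σ l)) x (mem_Icc.2 ⟨hi, hil⟩)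
      simp only [mem_Icc, hi, hil, hjl, and_true, and_false, if_true, if_false, sub_zero]
      refine mem_Icc_of_mem_Icc_floor_ceil hS ?_
      rw [← hsplit, hz, Int.floor_add_intCast, Int.ceil_add_intCast]
      push_cast
      exact ⟨by linarith [hδ.1], by linarith [hδ.2]⟩
    · simpa [hil, hjl] using hS
  · rw [sum_add_single_sub_single, hx.2]
    simp [mem_Icc, hi, hij.le.trans hj, hj, (show 1 ≤ j by omega)]

theorem stmt_11_general (n m : ℕ)
    (σ : ℕ → ℕ)
    (a b : ℕ → ℤ) (B : ℤ)
    (f : ℕ → ℝ → ℝ)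
    (x : ℕ → ℝ) (hx : MemRAPNC n m σ a b B x)
    (hnonint : 0 < nonIntegerCount n x) :
    ∃ x' : ℕ → ℝ, MemRAPNC n m σ a b B x' ∧
      ∑ i ∈ Finset.Icc 1 n, fpl (f i) (x' i) ≤ ∑ i ∈ Finset.Icc 1 n, fpl (f i) (x i) ∧
      nonIntegerCount n x' < nonIntegerCount n x := by
  obtain ⟨i, j, hi, hij, hj, hxi, hxj, hint⟩ := exists_pair_nonint_of_sum_eq_int hx.2 hnonint
  obtain ⟨δ, hδi, hδj, hδc, hδint⟩ := exists_shift_mem_Icc_floor_ceil (x i) (x j)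
    ((f i ⌈x i⌉ - f i ⌊x i⌋) - (f j ⌈x j⌉ - f j ⌊x j⌋))
  have hiI : i ∈ Icc 1 n := mem_Icc.2 ⟨hi, by omega⟩
  have hjI : j ∈ Icc 1 n := mem_Icc.2 ⟨by omega, hj⟩
  refine ⟨x + Pi.single i δ - Pi.single j δ, hx.add_single_sub_single hi hij hj hint hδi, ?_,
    nonIntegerCount_add_single_sub_single_lt hij.ne hiI hjI hxi hxj hδint⟩
  rw [sum_fpl_add_single_sub_single f hij.ne hiI hjI hδi hδj]
  linarith

theorem stmt_11 (n m : ℕ) (hn : 0 < n) (hm : 0 < m)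
    (σ : ℕ → ℕ)
    (hσmono : ∀ i j, 1 ≤ i → i < j → j ≤ m - 1 → σ i < σ j)
    (hσrange : ∀ i, 1 ≤ i → i ≤ m - 1 → 1 ≤ σ i ∧ σ i ≤ n)
    (a b : ℕ → ℤ) (B : ℤ)
    (f : ℕ → ℝ → ℝ) (hconv : ∀ i, ConvexOn ℝ Set.univ (f i))
    (x : ℕ → ℝ) (hx : MemRAPNC n m σ a b B x)
    (hnonint : 0 < nonIntegerCount n x) :
    ∃ x' : ℕ → ℝ, MemRAPNC n m σ a b B x' ∧
      ∑ i ∈ Finset.Icc 1 n, fpl (f i) (x' i) ≤ ∑ i ∈ Finset.Icc 1 n, fpl (f i) (x i) ∧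
      nonIntegerCount n x' < nonIntegerCount n x :=
  stmt_11_general n m σ a b B f x hx hnonint
end

section
/- Consider the problem of minimizing f^pl(x) = Σ_{i=1}^n f^pl_i(x_i) over the RAP-NC polytope P with integer data (a_i, b_i, B ∈ ℤ), where f^pl_i are convex piecewise-linear with integer breakpoints. If x* is an optimal solution among the integer points of P, then x* is optimal over all of P (i.e., f^pl(x*) ≤ f^pl(x) for every x ∈ P). -/
/-
On the cell `∏ₖ [⌊xₖ⌋, ⌈xₖ⌉]` of a point `x` the objective is affine. If a feasible `x` is not
integral, let `i < j` be its two smallest fractional coordinates in `1..n` (there are at least two,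
because the total `B` is an integer). Moving mass `t` from `xⱼ` to `xᵢ` inside the cell changes the
objective by `t` times the difference of the two slopes, so one of the two extreme moves does not
increase it, and that move makes `xᵢ` or `xⱼ` integral. The move stays in `P`: a prefix containing
`i` but not `j` sums to an integer plus `xᵢ`, so its new sum lies in `[⌊Σ⌋, ⌈Σ⌉] ⊆ [aₗ, bₗ]`, and
every other prefix sum is unchanged. Repeating this reaches an integral point of `P` that is no
worse than `x`.
-/

open Finset

/-- `x` has all coordinates integer. -/
def IsIntegerVec (x : ℕ → ℝ) : Prop := ∀ i, ∃ z : ℤ, x i = (z : ℝ)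

lemma fpl_eq_of_mem_Icc_s12 (g : ℝ → ℝ) {c : ℤ} {s : ℝ} (h₁ : (c : ℝ) ≤ s) (h₂ : s ≤ c + 1) :
    fpl g s = g c + (s - c) * (g (c + 1) - g c) := by
  rcases h₂.eq_or_lt with h | h
  · have hfl : ⌊s⌋ = c + 1 := by rw [h]; exact_mod_cast Int.floor_intCast (c + 1)
    have hce : ⌈s⌉ = c + 1 := by rw [h]; exact_mod_cast Int.ceil_intCast (c + 1)
    rw [fpl, hfl, hce, h]; push_cast; ring
  · have hfl : ⌊s⌋ = c := Int.floor_eq_iff.2 ⟨h₁, h⟩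
    rcases h₁.eq_or_lt with h₀ | h₀
    · rw [fpl, hfl, ← h₀, Int.ceil_intCast]; ring
    · have hce : ⌈s⌉ = c + 1 := Int.ceil_eq_iff.2 ⟨by push_cast; linarith, by push_cast; linarith⟩
      rw [fpl, hfl, hce]; push_cast; ring

lemma fpl_eq_add_of_mem_Icc (g : ℝ → ℝ) {u v : ℝ} (hv : v ∈ Set.Icc (⌊u⌋ : ℝ) ⌈u⌉) :
    fpl g v = fpl g u + (v - u) * (g ⌈u⌉ - g ⌊u⌋) := by
  by_cases hu : u ∈ Set.range Int.cast
  · have hfl : (⌊u⌋ : ℝ) = u := (Int.floor_eq_self_iff_mem u).2 hu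
    have hce : (⌈u⌉ : ℝ) = u := (Int.ceil_eq_self_iff_mem u).2 hu
    obtain rfl : v = u := le_antisymm (hce ▸ hv.2) (hfl ▸ hv.1)
    ring
  · have hce : (⌈u⌉ : ℝ) = ⌊u⌋ + 1 := by
      exact_mod_cast (Int.ceil_eq_floor_add_one_iff_notMem u).2 hu
    rw [hce, fpl_eq_of_mem_Icc_s12 g hv.1 (hce ▸ hv.2),
      fpl_eq_of_mem_Icc_s12 g (Int.floor_le u) (Int.lt_floor_add_one u).le]
    ring

section Transfer

variable {ι : Type*} [DecidableEq ι]

def transfer (x : ι → ℝ) (i j : ι) (t : ℝ) : ι → ℝ := x + Pi.single i t - Pi.single j t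

variable {x : ι → ℝ} {i j : ι} {t : ℝ}

lemma transfer_apply_of_ne {k : ι} (hki : k ≠ i) (hkj : k ≠ j) : transfer x i j t k = x k := by
  simp [transfer, hki, hkj]

lemma transfer_apply_left (hij : i ≠ j) : transfer x i j t i = x i + t := by
  simp [transfer, hij]

lemma transfer_apply_right (hij : i ≠ j) : transfer x i j t j = x j - t := by
  simp [transfer, hij.symm]

lemma sum_transfer (s : Finset ι) :
    ∑ k ∈ s, transfer x i j t k
      = ∑ k ∈ s, x k + (if i ∈ s then t else 0) - (if j ∈ s then t else 0) := by
  simp [transfer, sum_add_distrib, sum_sub_distrib, sum_pi_single']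

lemma sum_transfer_of_mem (s : Finset ι) (hi : i ∈ s) (hj : j ∈ s) :
    ∑ k ∈ s, transfer x i j t k = ∑ k ∈ s, x k := by
  rw [sum_transfer, if_pos hi, if_pos hj, add_sub_cancel_right]

lemma exists_sum_eq_intCast_add {s : Finset ι} (hi : i ∈ s)
    (hint : ∀ k ∈ s, k ≠ i → Int.fract (x k) = 0) : ∃ z : ℤ, ∑ k ∈ s, x k = z + x i := by
  refine ⟨∑ k ∈ s.erase i, ⌊x k⌋, ?_⟩
  rw [← add_sum_erase s x hi, add_comm, Int.cast_sum]
  congr 1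
  refine sum_congr rfl fun k hk => ?_
  linarith [Int.self_sub_floor (x k), hint k (mem_of_mem_erase hk) (ne_of_mem_erase hk)]

lemma sum_transfer_mem_Icc {s : Finset ι} {a b : ℤ} (hi : i ∈ s) (hj : j ∉ s)
    (hint : ∀ k ∈ s, k ≠ i → Int.fract (x k) = 0) (ht : x i + t ∈ Set.Icc (⌊x i⌋ : ℝ) ⌈x i⌉)
    (hx : ∑ k ∈ s, x k ∈ Set.Icc (a : ℝ) b) :
    ∑ k ∈ s, transfer x i j t k ∈ Set.Icc (a : ℝ) b := by
  obtain ⟨z, hz⟩ := exists_sum_eq_intCast_add hi hint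
  rw [hz] at hx
  have ha : a ≤ z + ⌊x i⌋ := Int.floor_intCast_add z (x i) ▸ Int.le_floor.2 hx.1
  have hb : z + ⌈x i⌉ ≤ b := Int.ceil_intCast_add z (x i) ▸ Int.ceil_le.2 hx.2
  have ha' : (a : ℝ) ≤ z + ⌊x i⌋ := by exact_mod_cast ha
  have hb' : (z : ℝ) + ⌈x i⌉ ≤ b := by exact_mod_cast hb
  rw [sum_transfer, if_pos hi, if_neg hj, hz]
  constructor <;> linarith [ht.1, ht.2]

lemma sum_fpl_transfer (f : ι → ℝ → ℝ) {s : Finset ι} (hi : i ∈ s) (hj : j ∈ s) (hij : i ≠ j)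
    (hti : x i + t ∈ Set.Icc (⌊x i⌋ : ℝ) ⌈x i⌉) (htj : x j - t ∈ Set.Icc (⌊x j⌋ : ℝ) ⌈x j⌉) :
    ∑ k ∈ s, fpl (f k) (transfer x i j t k)
      = ∑ k ∈ s, fpl (f k) (x k)
        + t * ((f i ⌈x i⌉ - f i ⌊x i⌋) - (f j ⌈x j⌉ - f j ⌊x j⌋)) := by
  have hdiff : ∑ k ∈ s, (fpl (f k) (transfer x i j t k) - fpl (f k) (x k))
      = t * ((f i ⌈x i⌉ - f i ⌊x i⌋) - (f j ⌈x j⌉ - f j ⌊x j⌋)) := by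
    rw [sum_eq_add_of_mem i j hi hj hij
        fun k _ hk => by rw [transfer_apply_of_ne hk.1 hk.2, sub_self],
      transfer_apply_left hij, transfer_apply_right hij, fpl_eq_add_of_mem_Icc _ hti,
      fpl_eq_add_of_mem_Icc _ htj]
    ring
  rw [← hdiff, sum_sub_distrib]
  ring

end Transfer

lemma exists_transfer_amount (u v d : ℝ) :
    ∃ t : ℝ, u + t ∈ Set.Icc (⌊u⌋ : ℝ) ⌈u⌉ ∧ v - t ∈ Set.Icc (⌊v⌋ : ℝ) ⌈v⌉ ∧ t * d ≤ 0 ∧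
      (Int.fract (u + t) = 0 ∨ Int.fract (v - t) = 0) := by
  have hu₁ := Int.floor_le u
  have hu₂ := Int.le_ceil u
  have hv₁ := Int.floor_le v
  have hv₂ := Int.le_ceil v
  rcases le_total d 0 with hd | hd
  · have h₁ := min_le_left (⌈u⌉ - u) (v - ⌊v⌋)
    have h₂ := min_le_right (⌈u⌉ - u) (v - ⌊v⌋)
    have h₀ : 0 ≤ min (⌈u⌉ - u) (v - ⌊v⌋) := le_min (by linarith) (by linarith)
    refine ⟨min (⌈u⌉ - u) (v - ⌊v⌋), ⟨by linarith, by linarith⟩, ⟨by linarith, by linarith⟩,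
      mul_nonpos_of_nonneg_of_nonpos h₀ hd, ?_⟩
    rcases min_choice (⌈u⌉ - u) (v - ⌊v⌋) with h | h <;> rw [h]
    · left; rw [add_sub_cancel, Int.fract_intCast]
    · right; rw [sub_sub_cancel, Int.fract_intCast]
  · have h₁ := le_max_left (⌊u⌋ - u) (v - ⌈v⌉)
    have h₂ := le_max_right (⌊u⌋ - u) (v - ⌈v⌉)
    have h₀ : max (⌊u⌋ - u) (v - ⌈v⌉) ≤ 0 := max_le (by linarith) (by linarith)
    refine ⟨max (⌊u⌋ - u) (v - ⌈v⌉), ⟨by linarith, by linarith⟩, ⟨by linarith, by linarith⟩,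
      mul_nonpos_of_nonpos_of_nonneg h₀ hd, ?_⟩
    rcases max_choice (⌊u⌋ - u) (v - ⌈v⌉) with h | h <;> rw [h]
    · left; rw [add_sub_cancel, Int.fract_intCast]
    · right; rw [sub_sub_cancel, Int.fract_intCast]

lemma Finset.Nontrivial.exists_lt_forall_lt_eq {α : Type*} [LinearOrder α] {s : Finset α}
    (hs : s.Nontrivial) : ∃ i ∈ s, ∃ j ∈ s, i < j ∧ ∀ k ∈ s, k < j → k = i := by
  set i := s.min' hs.nonempty
  have hi : i ∈ s := s.min'_mem hs.nonempty
  have hne : (s.erase i).Nonempty := hs.erase_nonempty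
  have hj : (s.erase i).min' hne ∈ s.erase i := (s.erase i).min'_mem hne
  refine ⟨i, hi, _, mem_of_mem_erase hj, (s.min'_le _ (mem_of_mem_erase hj)).lt_of_ne
    (ne_of_mem_erase hj).symm, fun k hk hkj => ?_⟩
  by_contra hki
  exact (hkj.trans_le ((s.erase i).min'_le k (mem_erase.2 ⟨hki, hk⟩))).false

section FracSupport

variable {ι : Type*} {s : Finset ι} {x : ι → ℝ}

noncomputable def fracSupport (s : Finset ι) (x : ι → ℝ) : Finset ι :=
  s.filter fun k => Int.fract (x k) ≠ 0

lemma fracSupport_eq_empty_iff : fracSupport s x = ∅ ↔ ∀ k ∈ s, Int.fract (x k) = 0 := by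
  simp [fracSupport, filter_eq_empty_iff]

lemma fracSupport_nontrivial {B : ℤ} (hB : ∑ k ∈ s, x k = B) (hne : (fracSupport s x).Nonempty) :
    (fracSupport s x).Nontrivial := by
  classical
  refine hne.exists_eq_singleton_or_nontrivial.resolve_left fun ⟨i, hi⟩ => ?_
  obtain ⟨his, hfrac⟩ := mem_filter.1 (hi ▸ mem_singleton_self i : i ∈ fracSupport s x)
  obtain ⟨z, hz⟩ := exists_sum_eq_intCast_add his fun k hk hki => by
    by_contra h
    exact hki (mem_singleton.1 (hi ▸ mem_filter.2 ⟨hk, h⟩))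
  have hxi : x i = ((B - z : ℤ) : ℝ) := by push_cast; linarith
  exact hfrac (hxi ▸ Int.fract_intCast _)

lemma fracSupport_transfer_ssubset [DecidableEq ι] {i j : ι} {t : ℝ} (hi : i ∈ fracSupport s x)
    (hj : j ∈ fracSupport s x) (hij : i ≠ j)
    (ht : Int.fract (x i + t) = 0 ∨ Int.fract (x j - t) = 0) :
    fracSupport s (transfer x i j t) ⊂ fracSupport s x := by
  have hsub : fracSupport s (transfer x i j t) ⊆ fracSupport s x := fun k hk => by
    by_cases hki : k = i
    · exact hki ▸ hi
    by_cases hkj : k = j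
    · exact hkj ▸ hj
    simpa only [fracSupport, mem_filter, transfer_apply_of_ne hki hkj] using hk
  refine (ssubset_iff_of_subset hsub).2 ?_
  rcases ht with ht | ht
  · exact ⟨i, hi, fun h => (mem_filter.1 h).2 (by rwa [transfer_apply_left hij])⟩
  · exact ⟨j, hj, fun h => (mem_filter.1 h).2 (by rwa [transfer_apply_right hij])⟩

end FracSupport

section RAPNC

variable {n m : ℕ} {σ : ℕ → ℕ} {a b : ℕ → ℤ} {B : ℤ}

lemma MemRAPNC.congr (hσ : ∀ l, 1 ≤ l → l ≤ m - 1 → σ l ≤ n) {x y : ℕ → ℝ}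
    (hx : MemRAPNC n m σ a b B x) (hxy : ∀ k ∈ Icc 1 n, x k = y k) : MemRAPNC n m σ a b B y := by
  have hsum : ∀ p ≤ n, ∑ k ∈ Icc 1 p, x k = ∑ k ∈ Icc 1 p, y k := fun p hp =>
    sum_congr rfl fun k hk => hxy k (Icc_subset_Icc_right hp hk)
  exact ⟨fun l hl₁ hl₂ => hsum _ (hσ l hl₁ hl₂) ▸ hx.1 l hl₁ hl₂, hsum n le_rfl ▸ hx.2⟩

lemma memRAPNC_transfer (hσ : ∀ l, 1 ≤ l → l ≤ m - 1 → σ l ≤ n) {x : ℕ → ℝ}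
    (hx : MemRAPNC n m σ a b B x) {i j : ℕ} {t : ℝ} (hi : i ∈ Icc 1 n) (hj : j ∈ Icc 1 n)
    (hij : i < j) (hint : ∀ k ∈ Icc 1 n, k < j → k ≠ i → Int.fract (x k) = 0)
    (ht : x i + t ∈ Set.Icc (⌊x i⌋ : ℝ) ⌈x i⌉) : MemRAPNC n m σ a b B (transfer x i j t) := by
  refine ⟨fun l hl₁ hl₂ => ?_, (sum_transfer_of_mem _ hi hj).trans hx.2⟩
  have hσl := hσ l hl₁ hl₂
  have hi₁ := (mem_Icc.1 hi).1
  by_cases hjl : j ≤ σ l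
  · rw [sum_transfer_of_mem _ (mem_Icc.2 ⟨hi₁, by omega⟩) (mem_Icc.2 ⟨by omega, hjl⟩)]
    exact hx.1 l hl₁ hl₂
  have hj' : j ∉ Icc 1 (σ l) := fun h => hjl (mem_Icc.1 h).2
  by_cases hil : i ≤ σ l
  · refine sum_transfer_mem_Icc (mem_Icc.2 ⟨hi₁, hil⟩) hj' (fun k hk hki => ?_) ht (hx.1 l hl₁ hl₂)
    have hk' := mem_Icc.1 hk
    exact hint k (mem_Icc.2 ⟨hk'.1, hk'.2.trans hσl⟩) (by omega) hki
  · rw [sum_transfer, if_neg fun h => hil (mem_Icc.1 h).2, if_neg hj', add_zero, sub_zero]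
    exact hx.1 l hl₁ hl₂

lemma exists_memRAPNC_fracSupport_ssubset (hσ : ∀ l, 1 ≤ l → l ≤ m - 1 → σ l ≤ n)
    (f : ℕ → ℝ → ℝ) {x : ℕ → ℝ} (hx : MemRAPNC n m σ a b B x)
    (hne : (fracSupport (Icc 1 n) x).Nonempty) :
    ∃ x', MemRAPNC n m σ a b B x' ∧ fracSupport (Icc 1 n) x' ⊂ fracSupport (Icc 1 n) x ∧
      ∑ k ∈ Icc 1 n, fpl (f k) (x' k) ≤ ∑ k ∈ Icc 1 n, fpl (f k) (x k) := by
  obtain ⟨i, hiF, j, hjF, hij, hmin⟩ :=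
    (fracSupport_nontrivial hx.2 hne).exists_lt_forall_lt_eq
  obtain ⟨t, hti, htj, hdecr, hnew⟩ := exists_transfer_amount (x i) (x j)
    ((f i ⌈x i⌉ - f i ⌊x i⌋) - (f j ⌈x j⌉ - f j ⌊x j⌋))
  have hi := (mem_filter.1 hiF).1
  have hj := (mem_filter.1 hjF).1
  refine ⟨transfer x i j t, memRAPNC_transfer hσ hx hi hj hij (fun k hk hkj hki => ?_) hti,
    fracSupport_transfer_ssubset hiF hjF hij.ne hnew, ?_⟩
  · by_contra hk'
    exact hki (hmin k (mem_filter.2 ⟨hk, hk'⟩) hkj)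
  · rw [sum_fpl_transfer f hi hj hij.ne hti htj]
    linarith

theorem exists_integral_memRAPNC_le (hσ : ∀ l, 1 ≤ l → l ≤ m - 1 → σ l ≤ n)
    (f : ℕ → ℝ → ℝ) {x : ℕ → ℝ} (hx : MemRAPNC n m σ a b B x) :
    ∃ y, MemRAPNC n m σ a b B y ∧ (∀ k ∈ Icc 1 n, Int.fract (y k) = 0) ∧
      ∑ k ∈ Icc 1 n, fpl (f k) (y k) ≤ ∑ k ∈ Icc 1 n, fpl (f k) (x k) := by
  induction hc : (fracSupport (Icc 1 n) x).card using Nat.strong_induction_on generalizing x with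
  | _ c ih =>
  rcases (fracSupport (Icc 1 n) x).eq_empty_or_nonempty with h | h
  · exact ⟨x, hx, fracSupport_eq_empty_iff.1 h, le_rfl⟩
  obtain ⟨x', hx', hss, hle⟩ := exists_memRAPNC_fracSupport_ssubset hσ f hx h
  obtain ⟨y, hy, hyint, hyle⟩ := ih _ (hc ▸ card_lt_card hss) hx' rfl
  exact ⟨y, hy, hyint, hyle.trans hle⟩

end RAPNC

theorem stmt_12_general (n m : ℕ)
    (σ : ℕ → ℕ)
    (hσrange : ∀ i, 1 ≤ i → i ≤ m - 1 → 1 ≤ σ i ∧ σ i ≤ n)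
    (a b : ℕ → ℤ) (B : ℤ)
    (f : ℕ → ℝ → ℝ)
    (xstar : ℕ → ℝ)
    (hopt : ∀ y : ℕ → ℝ, MemRAPNC n m σ a b B y → IsIntegerVec y →
      ∑ i ∈ Finset.Icc 1 n, fpl (f i) (xstar i) ≤ ∑ i ∈ Finset.Icc 1 n, fpl (f i) (y i)) :
    ∀ x : ℕ → ℝ, MemRAPNC n m σ a b B x →
      ∑ i ∈ Finset.Icc 1 n, fpl (f i) (xstar i) ≤ ∑ i ∈ Finset.Icc 1 n, fpl (f i) (x i) := by
  intro x hx
  have hσ : ∀ l, 1 ≤ l → l ≤ m - 1 → σ l ≤ n := fun l hl₁ hl₂ => (hσrange l hl₁ hl₂).2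
  obtain ⟨y, hy, hyint, hyx⟩ := exists_integral_memRAPNC_le hσ f hx
  have hfloor : ∀ k ∈ Icc 1 n, y k = ⌊y k⌋ := fun k hk => by
    linarith [Int.self_sub_floor (y k), hyint k hk]
  calc ∑ i ∈ Icc 1 n, fpl (f i) (xstar i)
      ≤ ∑ i ∈ Icc 1 n, fpl (f i) ⌊y i⌋ := hopt _ (hy.congr hσ hfloor) fun k => ⟨_, rfl⟩
    _ = ∑ i ∈ Icc 1 n, fpl (f i) (y i) := sum_congr rfl fun k hk => by rw [← hfloor k hk]
    _ ≤ ∑ i ∈ Icc 1 n, fpl (f i) (x i) := hyx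

theorem stmt_12 (n m : ℕ) (hn : 0 < n) (hm : 0 < m)
    (σ : ℕ → ℕ)
    (hσmono : ∀ i j, 1 ≤ i → i < j → j ≤ m - 1 → σ i < σ j)
    (hσrange : ∀ i, 1 ≤ i → i ≤ m - 1 → 1 ≤ σ i ∧ σ i ≤ n)
    (a b : ℕ → ℤ) (B : ℤ)
    (f : ℕ → ℝ → ℝ) (hconv : ∀ i, ConvexOn ℝ Set.univ (f i))
    (xstar : ℕ → ℝ) (hxstar : MemRAPNC n m σ a b B xstar)
    (hint : IsIntegerVec xstar)
    (hopt : ∀ y : ℕ → ℝ, MemRAPNC n m σ a b B y → IsIntegerVec y →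
      ∑ i ∈ Finset.Icc 1 n, fpl (f i) (xstar i) ≤ ∑ i ∈ Finset.Icc 1 n, fpl (f i) (y i)) :
    ∀ x : ℕ → ℝ, MemRAPNC n m σ a b B x →
      ∑ i ∈ Finset.Icc 1 n, fpl (f i) (xstar i) ≤ ∑ i ∈ Finset.Icc 1 n, fpl (f i) (x i) :=
  stmt_12_general n m σ hσrange a b B f xstar hopt
end

section
/- Let x, x* ∈ ℝ^n with Σ_{k=1}^n x_k ≤ Σ_{k=1}^n x*_k, and suppose x_s ≥ x*_s + n - 1 for some index s, with n ≥ 2. Let r be the greatest index in {1,…,s} such that Σ_{k=1}^{r-1} x_k ≥ Σ_{k=1}^{r-1} x*_k (r exists since the condition holds vacuously for r = 1), and t the smallest index in {s,…,n} with Σ_{k=1}^{t} x_k ≤ Σ_{k=1}^{t} x*_k (t exists by the total-sum assumption). Then Σ_{i=r}^{t} x*_i ≥ Σ_{i=r}^{t} x_i, and consequently there exists u ∈ {r,…,t} \ {s} with x*_u ≥ x_u + 1. -/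
/-!
Up to `r - 1` the prefix sums of `x` dominate those of `xstar`, up to `t` they do not, so on the
window `[r, t]` the total of `xstar - x` is nonnegative. As `x` exceeds `xstar` by `n - 1` at `s`,
the at most `n - 1` other indices of the window carry a total of at least `n - 1`, so one of them
carries at least `1`.
-/

open Finset

theorem sum_Icc_one_add_sum_Icc {M : Type*} [AddCommMonoid M] (f : ℕ → M) {r t : ℕ}
    (hr : 1 ≤ r) (hrt : r ≤ t + 1) :
    ∑ k ∈ Icc 1 (r - 1), f k + ∑ k ∈ Icc r t, f k = ∑ k ∈ Icc 1 t, f k := by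
  obtain ⟨q, rfl⟩ := Nat.exists_eq_add_of_le' hr
  rw [Nat.add_sub_cancel, Icc_add_one_left_eq_Ioc, ← zero_add 1, Icc_add_one_left_eq_Ioc,
    Icc_add_one_left_eq_Ioc]
  exact sum_Ioc_consecutive f (Nat.zero_le q) (by omega)

theorem sum_Icc_le_sum_Icc_of_prefix_sums {M : Type*} [AddCommGroup M] [PartialOrder M]
    [IsOrderedAddMonoid M] {f g : ℕ → M} {r t : ℕ} (hr : 1 ≤ r) (hrt : r ≤ t + 1)
    (hbefore : ∑ k ∈ Icc 1 (r - 1), g k ≤ ∑ k ∈ Icc 1 (r - 1), f k)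
    (hupto : ∑ k ∈ Icc 1 t, f k ≤ ∑ k ∈ Icc 1 t, g k) :
    ∑ k ∈ Icc r t, f k ≤ ∑ k ∈ Icc r t, g k := by
  rw [← sum_Icc_one_add_sum_Icc f hr hrt, ← sum_Icc_one_add_sum_Icc g hr hrt] at hupto
  exact le_of_add_le_add_left (hupto.trans (by gcongr))

theorem exists_one_le_of_card_le_sum {ι : Type*} {S : Finset ι} {g : ι → ℝ}
    (hpos : 0 < ∑ i ∈ S, g i) (hcard : (#S : ℝ) ≤ ∑ i ∈ S, g i) : ∃ i ∈ S, 1 ≤ g i := by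
  by_contra! hlt
  have hS : S.Nonempty := nonempty_of_sum_ne_zero hpos.ne'
  have := sum_lt_sum_of_nonempty hS hlt
  simp only [sum_const, nsmul_eq_mul, mul_one] at this
  linarith

theorem stmt_13_general (n : ℕ) (hn : 2 ≤ n) (x xstar : ℕ → ℝ) (s : ℕ)
    (hxs : x s ≥ xstar s + (n : ℝ) - 1)
    (r : ℕ) (hr1 : 1 ≤ r) (hrs : r ≤ s)
    (hrprop : ∑ k ∈ Finset.Icc 1 (r - 1), x k ≥ ∑ k ∈ Finset.Icc 1 (r - 1), xstar k)
    (t : ℕ) (hts : s ≤ t) (htn : t ≤ n)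
    (htprop : ∑ k ∈ Finset.Icc 1 t, x k ≤ ∑ k ∈ Finset.Icc 1 t, xstar k) :
    (∑ i ∈ Finset.Icc r t, xstar i ≥ ∑ i ∈ Finset.Icc r t, x i) ∧
    ∃ u, r ≤ u ∧ u ≤ t ∧ u ≠ s ∧ xstar u ≥ x u + 1 := by
  have hwindow : ∑ i ∈ Icc r t, x i ≤ ∑ i ∈ Icc r t, xstar i :=
    sum_Icc_le_sum_Icc_of_prefix_sums hr1 (by omega) hrprop htprop
  refine ⟨hwindow, ?_⟩
  have hs : s ∈ Icc r t := mem_Icc.mpr ⟨hrs, hts⟩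
  have hrest : (n : ℝ) - 1 ≤ ∑ i ∈ (Icc r t).erase s, (xstar i - x i) := by
    have hdeficit : 0 ≤ ∑ i ∈ Icc r t, (xstar i - x i) := by
      rw [sum_sub_distrib]; linarith
    rw [← sum_erase_add _ _ hs] at hdeficit
    linarith
  have hcard : (#((Icc r t).erase s) : ℝ) + 1 ≤ n := by
    have : #((Icc r t).erase s) + 1 ≤ n := by
      rw [card_erase_of_mem hs, Nat.card_Icc]; omega
    exact_mod_cast this
  have hn' : (2 : ℝ) ≤ n := by exact_mod_cast hn
  obtain ⟨u, hu, hgap⟩ := exists_one_le_of_card_le_sum (by linarith) (by linarith)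
  obtain ⟨hus, hu⟩ := mem_erase.mp hu
  obtain ⟨hru, hut⟩ := mem_Icc.mp hu
  exact ⟨u, hru, hut, hus, by linarith⟩

theorem stmt_13 (n : ℕ) (hn : 2 ≤ n) (x xstar : ℕ → ℝ)
    (hsum : ∑ k ∈ Finset.Icc 1 n, x k ≤ ∑ k ∈ Finset.Icc 1 n, xstar k)
    (s : ℕ) (hs1 : 1 ≤ s) (hsn : s ≤ n)
    (hxs : x s ≥ xstar s + (n : ℝ) - 1)
    (r : ℕ) (hr1 : 1 ≤ r) (hrs : r ≤ s)
    (hrprop : ∑ k ∈ Finset.Icc 1 (r - 1), x k ≥ ∑ k ∈ Finset.Icc 1 (r - 1), xstar k)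
    (hrmax : ∀ j, r < j → j ≤ s →
      ∑ k ∈ Finset.Icc 1 (j - 1), x k < ∑ k ∈ Finset.Icc 1 (j - 1), xstar k)
    (t : ℕ) (hts : s ≤ t) (htn : t ≤ n)
    (htprop : ∑ k ∈ Finset.Icc 1 t, x k ≤ ∑ k ∈ Finset.Icc 1 t, xstar k)
    (htmin : ∀ j, s ≤ j → j < t →
      ∑ k ∈ Finset.Icc 1 j, x k > ∑ k ∈ Finset.Icc 1 j, xstar k) :
    (∑ i ∈ Finset.Icc r t, xstar i ≥ ∑ i ∈ Finset.Icc r t, x i) ∧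
    ∃ u, r ≤ u ∧ u ≤ t ∧ u ≠ s ∧ xstar u ≥ x u + 1 :=
  stmt_13_general n hn x xstar s hxs r hr1 hrs hrprop t hts htn htprop
end
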